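/- There is a constant K = K(d) such that for all r ∈ {0,…,d}, h ∈ (0,1], and d×d matrices A,B,C,D with rank(A) ≤ r: |h^{-(2d-2r)} det(A+hB+h²C+h²D)² − γ_r(A,B)² − 2h γ_r(A,B)(γ_{r-1}(A,B)+γ'_r(A,B,C))| ≤ K h Λ^{2d-1}(hΛ + ‖D‖), where Λ = ‖A‖+‖B‖+‖C‖+‖D‖. -/

import Mathlib

noncomputable def colMix {d : ℕ} (A B : Matrix (Fin d) (Fin d) ℝ) (I : Finset (Fin d)) :
    Matrix (Fin d) (Fin d) ℝ :=
  Matrix.of fun i j => if j ∈ I then A i j else B i j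

/-- `γ_r(A,B) = Σ_{|I|=r} det(G_{A,B}^I)`. -/
noncomputable def gammaR {d : ℕ} (r : ℕ) (A B : Matrix (Fin d) (Fin d) ℝ) : ℝ :=
  ∑ I ∈ Finset.univ.powersetCard r, (colMix A B I).det

/-- `γ_{r-1}(A,B)`, with the convention `γ_{-1} = 0`. -/
noncomputable def gammaPred {d : ℕ} (r : ℕ) (A B : Matrix (Fin d) (Fin d) ℝ) : ℝ :=
  if r = 0 then 0 else gammaR (r - 1) A B

/-- `γ'_r(A,B,C)`: sum over ordered partitions `(I₁,I₂,I₃)` of sizes `r, d-r-1, 1`,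
with columns of `A` on `I₁`, of `C` on the singleton `I₃`, of `B` elsewhere. -/
noncomputable def gamma' {d : ℕ} (r : ℕ) (A B C : Matrix (Fin d) (Fin d) ℝ) : ℝ :=
  ∑ I ∈ Finset.univ.powersetCard r, ∑ k ∈ Iᶜ,
    Matrix.det (Matrix.of fun i j =>
      if j ∈ I then A i j else if j = k then C i j else B i j)

/-- Frobenius (Euclidean) norm of a matrix. -/
noncomputable def frob {d : ℕ} (A : Matrix (Fin d) (Fin d) ℝ) : ℝ :=
  Real.sqrt (∑ i, ∑ j, (A i j) ^ 2)

open Finset Matrix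
open scoped Nat

/-! Expanding the determinant multilinearly in the columns writes `det (A + h • (B + h • E))` as a
sum over pairs `(I, J)` of `h ^ (#Iᶜ + #J)` times a determinant whose columns on `I` are columns of
`A` or zero; these vanish once `#I > rank A`. Hence the determinant is `h ^ (d - r)` times a
polynomial in `h` with bounded coefficients, constant term `γ_r(A, B)` and linear term
`γ_{r-1}(A, B) + γ'_r(A, B, E)`. Squaring this first-order expansion with `E = C + D` gives the
estimate; the only term of order `h` left over is `2 h γ_r(A, B) γ'_r(A, B, D)`, and
`γ'_r(A, B, D) = O(‖D‖ Λ^(d-1))` because each of its determinants has exactly one column of `D`. -/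

namespace Matrix

variable {n : Type*} [Fintype n] [DecidableEq n]

theorem abs_det_le_factorial_mul_prod {M : Matrix n n ℝ} {b : n → ℝ}
    (hM : ∀ i j, |M i j| ≤ b j) : |M.det| ≤ (Fintype.card n)! * ∏ j, b j :=
  calc
    |M.det| = |∑ σ : Equiv.Perm n, Equiv.Perm.sign σ • ∏ j, M (σ j) j| := by rw [det_apply]
    _ ≤ ∑ σ : Equiv.Perm n, |Equiv.Perm.sign σ • ∏ j, M (σ j) j| := abs_sum_le_sum_abs _ _
    _ = ∑ σ : Equiv.Perm n, ∏ j, |M (σ j) j| := sum_congr rfl fun σ _ => by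
      rw [← abs_prod]; exact (AbsoluteValue.abs : AbsoluteValue ℝ ℝ).map_units_int_smul _ _
    _ ≤ ∑ _σ : Equiv.Perm n, ∏ j, b j := by gcongr with σ _ j; exact hM _ _
    _ = (Fintype.card n)! * ∏ j, b j := by simp [Fintype.card_perm]

theorem det_eq_zero_of_rank_lt_card {K : Type*} [Field K] {A M : Matrix n n K} (S : Finset n)
    (hS : ∀ j ∈ S, M.col j ∈ LinearMap.range A.mulVecLin) (hr : A.rank < #S) : M.det = 0 := by
  by_contra hM
  have hli : LinearIndependent K fun j : S => M.col j :=
    (linearIndependent_cols_of_det_ne_zero hM).comp _ Subtype.val_injective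
  have : #S ≤ A.rank := by
    rw [← Fintype.card_coe S, ← finrank_span_eq_card hli, rank]
    exact Submodule.finrank_mono (Submodule.span_le.2 (Set.range_subset_iff.2 fun j => hS j j.2))
  omega

end Matrix

theorem abs_sum_pow_mul_sub_le {ι : Type*} (s : Finset ι) (e : ι → ℕ) (a : ι → ℝ) {h : ℝ}
    (h0 : 0 ≤ h) (h1 : h ≤ 1) :
    |∑ x ∈ s, h ^ e x * a x - ∑ x ∈ s with e x = 0, a x - h * ∑ x ∈ s with e x = 1, a x|
      ≤ h ^ 2 * ∑ x ∈ s, |a x| := by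
  have key : ∀ (k : ℕ) (y : ℝ),
      |h ^ k * y - (if k = 0 then y else 0) - h * (if k = 1 then y else 0)| ≤ h ^ 2 * |y| := by
    rintro (_ | _ | k) y
    · simp; positivity
    · simp; positivity
    · rw [if_neg (by omega), if_neg (by omega), mul_zero, sub_zero, sub_zero, abs_mul,
        abs_of_nonneg (by positivity)]
      exact mul_le_mul_of_nonneg_right (pow_le_pow_of_le_one h0 h1 (by omega)) (abs_nonneg y)
  rw [sum_filter, sum_filter, mul_sum, ← sum_sub_distrib, ← sum_sub_distrib, mul_sum]
  exact (abs_sum_le_sum_abs _ _).trans (sum_le_sum fun x _ => key (e x) (a x))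

theorem prod_ite_mem_eq_pow_mul_pow {ι M : Type*} [Fintype ι] [DecidableEq ι] [CommMonoid M]
    (I : Finset ι) (a b : M) : ∏ j, (if j ∈ I then a else b) = a ^ #I * b ^ #Iᶜ := by
  rw [prod_ite]; simp [compl_eq_univ_sdiff, filter_not]

section ColumnExpansion

variable {d : ℕ}

theorem det_add_eq_sum_det_colMix (X Y : Matrix (Fin d) (Fin d) ℝ) :
    (X + Y).det = ∑ I : Finset (Fin d), (colMix X Y I).det := by
  have hT : ∀ I : Finset (Fin d), (colMix X Y I)ᵀ = I.piecewise Xᵀ Yᵀ := fun I => by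
    ext j i; by_cases hj : j ∈ I <;> simp [colMix, Finset.piecewise, hj]
  simp_rw [← det_transpose (colMix X Y _), hT, ← det_transpose (X + Y), transpose_add]
  exact detRowAlternating.map_add_univ Xᵀ Yᵀ

theorem det_colMix_smul (a b : ℝ) (X Y : Matrix (Fin d) (Fin d) ℝ) (I : Finset (Fin d)) :
    (colMix (a • X) (b • Y) I).det = a ^ #I * b ^ #Iᶜ * (colMix X Y I).det := by
  have : colMix (a • X) (b • Y) I = colMix X Y I * diagonal fun j => if j ∈ I then a else b := by
    ext i j; by_cases hj : j ∈ I <;> simp [colMix, hj, mul_comm]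
  rw [this, det_mul, det_diagonal, prod_ite_mem_eq_pow_mul_pow, mul_comm]

/-- Columns of `A` on `I \ J`, of `E` on `J \ I`, of `B` off `I ∪ J`, and zero on `I ∩ J`. -/
noncomputable def colMix₃ (A B E : Matrix (Fin d) (Fin d) ℝ) (I J : Finset (Fin d)) :
    Matrix (Fin d) (Fin d) ℝ :=
  colMix (colMix 0 E I) (colMix A B I) J

theorem det_add_smul_add_smul_eq_sum_colMix₃ (A B E : Matrix (Fin d) (Fin d) ℝ) (h : ℝ) :
    (A + h • (B + h • E)).det
      = ∑ I : Finset (Fin d), ∑ J : Finset (Fin d), h ^ (#Iᶜ + #J) * (colMix₃ A B E I J).det := by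
  rw [det_add_eq_sum_det_colMix]
  refine sum_congr rfl fun I _ => ?_
  have hsplit : colMix A (B + h • E) I = h • colMix 0 E I + colMix A B I := by
    ext i j; by_cases hj : j ∈ I <;> simp [colMix, hj, add_comm]
  have hI := det_colMix_smul 1 h A (B + h • E) I
  rw [one_smul, one_pow, one_mul] at hI
  rw [hI, hsplit, det_add_eq_sum_det_colMix, mul_sum]
  refine sum_congr rfl fun J _ => ?_
  have hJ := det_colMix_smul h 1 (colMix 0 E I) (colMix A B I) J
  rw [one_smul, one_pow, mul_one] at hJ
  rw [hJ, colMix₃, pow_add]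
  ring

theorem det_colMix₃_eq_zero {r : ℕ} {A : Matrix (Fin d) (Fin d) ℝ} (hA : A.rank ≤ r)
    (B E : Matrix (Fin d) (Fin d) ℝ) {I : Finset (Fin d)} (J : Finset (Fin d)) (hI : r < #I) :
    (colMix₃ A B E I J).det = 0 := by
  refine det_eq_zero_of_rank_lt_card (A := A) I (fun j hj => ?_) (by omega)
  have hcol : (colMix₃ A B E I J).col j = if j ∈ J then 0 else A.col j := by
    ext i; by_cases hjJ : j ∈ J <;> simp [colMix₃, colMix, hj, hjJ]
  rw [hcol, range_mulVecLin]
  split_ifs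
  · exact zero_mem _
  · exact Submodule.subset_span ⟨j, rfl⟩

theorem det_add_smul_add_smul_eq_pow_mul_sum {r : ℕ} {A : Matrix (Fin d) (Fin d) ℝ}
    (hA : A.rank ≤ r) (hr : r ≤ d) (B E : Matrix (Fin d) (Fin d) ℝ) (h : ℝ) :
    (A + h • (B + h • E)).det = h ^ (d - r) *
      ∑ p : Finset (Fin d) × Finset (Fin d) with #p.1 ≤ r,
        h ^ (r - #p.1 + #p.2) * (colMix₃ A B E p.1 p.2).det := by
  rw [det_add_smul_add_smul_eq_sum_colMix₃, ← sum_product', ← univ_product_univ, mul_sum,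
    sum_filter]
  refine sum_congr rfl fun p _ => ?_
  split_ifs with hp
  · rw [← mul_assoc, ← pow_add, card_compl, Fintype.card_fin]
    congr 2
    omega
  · rw [det_colMix₃_eq_zero hA B E p.2 (by omega), mul_zero]

theorem gammaPred_eq_sum (r : ℕ) (A B : Matrix (Fin d) (Fin d) ℝ) :
    gammaPred r A B = ∑ I : Finset (Fin d) with #I + 1 = r, (colMix A B I).det := by
  cases r with
  | zero => simp [gammaPred]
  | succ m =>
    simp only [gammaPred, gammaR, Nat.add_one_ne_zero, if_false, add_tsub_cancel_right,
      Nat.add_right_cancel_iff]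
    congr 1
    ext I
    simp

theorem gamma'_eq_sum_det_colMix₃ (r : ℕ) (A B E : Matrix (Fin d) (Fin d) ℝ) :
    gamma' r A B E = ∑ I ∈ univ.powersetCard r, ∑ k, (colMix₃ A B E I {k}).det := by
  refine sum_congr rfl fun I _ => ?_
  rw [← sum_compl_add_sum I, sum_eq_zero (s := I), add_zero]
  · refine sum_congr rfl fun k hk => congrArg det ?_
    rw [mem_compl] at hk
    ext i j
    by_cases hjk : j = k
    · subst hjk; simp [colMix₃, colMix, hk]
    · simp [colMix₃, colMix, hjk]
  · exact fun k hk => det_eq_zero_of_column_eq_zero k fun i => by simp [colMix₃, colMix, hk]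

theorem sum_det_colMix₃_lowest_order (r : ℕ) (A B E : Matrix (Fin d) (Fin d) ℝ) :
    ∑ p ∈ {p : Finset (Fin d) × Finset (Fin d) | #p.1 ≤ r} with r - #p.1 + #p.2 = 0,
      (colMix₃ A B E p.1 p.2).det = gammaR r A B := by
  have hpairs : ({p ∈ {p : Finset (Fin d) × Finset (Fin d) | #p.1 ≤ r} | r - #p.1 + #p.2 = 0}
      : Finset _) = univ.powersetCard r ×ˢ {∅} := by
    ext ⟨I, J⟩
    simp only [mem_filter, mem_univ, true_and, mem_product, mem_powersetCard_univ, mem_singleton,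
      ← card_eq_zero]
    omega
  rw [hpairs, sum_product, gammaR]
  simp [colMix₃, colMix]

theorem sum_det_colMix₃_first_order (r : ℕ) (A B E : Matrix (Fin d) (Fin d) ℝ) :
    ∑ p ∈ {p : Finset (Fin d) × Finset (Fin d) | #p.1 ≤ r} with r - #p.1 + #p.2 = 1,
      (colMix₃ A B E p.1 p.2).det = gammaPred r A B + gamma' r A B E := by
  have hpairs : ({p ∈ {p : Finset (Fin d) × Finset (Fin d) | #p.1 ≤ r} | r - #p.1 + #p.2 = 1}
      : Finset _) = ({I : Finset (Fin d) | #I + 1 = r} : Finset _) ×ˢ {∅}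
        ∪ univ.powersetCard r ×ˢ univ.powersetCard 1 := by
    ext ⟨I, J⟩
    simp only [mem_filter, mem_univ, true_and, mem_union, mem_product, mem_powersetCard_univ,
      mem_singleton, ← card_eq_zero]
    omega
  have hdisj : Disjoint (({I : Finset (Fin d) | #I + 1 = r} : Finset _) ×ˢ {∅})
      (univ.powersetCard r ×ˢ (univ : Finset (Fin d)).powersetCard 1) := by
    simp [disjoint_left, mem_product]
  rw [hpairs, sum_union hdisj, sum_product, sum_product, gammaPred_eq_sum,
    gamma'_eq_sum_det_colMix₃, powersetCard_one]
  simp [colMix₃, colMix]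

theorem abs_entry_le_frob (A : Matrix (Fin d) (Fin d) ℝ) (i j : Fin d) : |A i j| ≤ frob A := by
  rw [frob, ← Real.sqrt_sq_eq_abs]
  gcongr
  calc A i j ^ 2 ≤ ∑ j', A i j' ^ 2 :=
        single_le_sum (f := fun j' => A i j' ^ 2) (fun _ _ => sq_nonneg _) (mem_univ j)
    _ ≤ ∑ i', ∑ j', A i' j' ^ 2 :=
        single_le_sum (f := fun i' => ∑ j', A i' j' ^ 2)
          (fun _ _ => sum_nonneg fun _ _ => sq_nonneg _) (mem_univ i)

section Bounds

variable {A B E : Matrix (Fin d) (Fin d) ℝ} {Λ : ℝ}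

theorem abs_det_colMix_le (hA : ∀ i j, |A i j| ≤ Λ) (hB : ∀ i j, |B i j| ≤ Λ)
    (I : Finset (Fin d)) : |(colMix A B I).det| ≤ d ! * Λ ^ d := by
  have hM : ∀ i j, |colMix A B I i j| ≤ Λ := fun i j => by
    simp only [colMix, of_apply]; split_ifs <;> simp [hA, hB]
  simpa using abs_det_le_factorial_mul_prod (b := fun _ => Λ) hM

theorem abs_det_colMix₃_le {δ : ℝ} (hδ : 0 ≤ δ) (hA : ∀ i j, |A i j| ≤ Λ)
    (hB : ∀ i j, |B i j| ≤ Λ) (hE : ∀ i j, |E i j| ≤ δ) (I J : Finset (Fin d)) :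
    |(colMix₃ A B E I J).det| ≤ d ! * (δ ^ #J * Λ ^ #Jᶜ) := by
  have hM : ∀ i j, |colMix₃ A B E I J i j| ≤ if j ∈ J then δ else Λ := fun i j => by
    simp only [colMix₃, colMix, of_apply]; split_ifs <;> simp [hA, hB, hE, hδ]
  simpa [prod_ite_mem_eq_pow_mul_pow] using abs_det_le_factorial_mul_prod hM

theorem card_finset_le_two_pow (s : Finset (Finset (Fin d))) : (#s : ℝ) ≤ 2 ^ d := by
  exact_mod_cast (card_le_univ s).trans (by simp)

theorem abs_gammaR_le (hΛ : 0 ≤ Λ) (hA : ∀ i j, |A i j| ≤ Λ) (hB : ∀ i j, |B i j| ≤ Λ) (r : ℕ) :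
    |gammaR r A B| ≤ 4 ^ d * d ! * Λ ^ d := by
  calc |gammaR r A B| ≤ ∑ I ∈ univ.powersetCard r, |(colMix A B I).det| := abs_sum_le_sum_abs _ _
    _ ≤ ∑ I ∈ univ.powersetCard r, d ! * Λ ^ d :=
      sum_le_sum fun I _ => abs_det_colMix_le hA hB I
    _ = #(univ.powersetCard r) * (d ! * Λ ^ d) := by rw [sum_const, nsmul_eq_mul]
    _ ≤ 4 ^ d * (d ! * Λ ^ d) := by
      gcongr
      exact (card_finset_le_two_pow _).trans (pow_le_pow_left₀ (by norm_num) (by norm_num) d)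
    _ = 4 ^ d * d ! * Λ ^ d := by ring

theorem abs_gammaPred_le (hΛ : 0 ≤ Λ) (hA : ∀ i j, |A i j| ≤ Λ) (hB : ∀ i j, |B i j| ≤ Λ) (r : ℕ) :
    |gammaPred r A B| ≤ 4 ^ d * d ! * Λ ^ d := by
  unfold gammaPred
  split_ifs
  · rw [abs_zero]; positivity
  · exact abs_gammaR_le hΛ hA hB _

theorem abs_gamma'_le {δ : ℝ} (hΛ : 0 ≤ Λ) (hδ : 0 ≤ δ) (hA : ∀ i j, |A i j| ≤ Λ)
    (hB : ∀ i j, |B i j| ≤ Λ) (hE : ∀ i j, |E i j| ≤ δ) (r : ℕ) :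
    |gamma' r A B E| ≤ 4 ^ d * d ! * (δ * Λ ^ (d - 1)) := by
  have hterm : ∀ I k, |(colMix₃ A B E I {k}).det| ≤ d ! * (δ * Λ ^ (d - 1)) := fun I k => by
    simpa [card_compl] using abs_det_colMix₃_le hδ hA hB hE I {k}
  rw [gamma'_eq_sum_det_colMix₃]
  calc |∑ I ∈ univ.powersetCard r, ∑ k, (colMix₃ A B E I {k}).det|
      ≤ ∑ I ∈ univ.powersetCard r, ∑ k, |(colMix₃ A B E I {k}).det| :=
        (abs_sum_le_sum_abs _ _).trans (sum_le_sum fun I _ => abs_sum_le_sum_abs _ _)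
    _ ≤ ∑ I ∈ univ.powersetCard r, ∑ _k : Fin d, d ! * (δ * Λ ^ (d - 1)) := by
      gcongr with I _ k; exact hterm I k
    _ = #(univ.powersetCard r) * (d * (d ! * (δ * Λ ^ (d - 1)))) := by
      rw [sum_const, sum_const, card_univ, Fintype.card_fin, nsmul_eq_mul, nsmul_eq_mul]
    _ ≤ 2 ^ d * (2 ^ d * (d ! * (δ * Λ ^ (d - 1)))) := by
      gcongr
      · exact card_finset_le_two_pow _
      · exact_mod_cast (Nat.lt_two_pow_self).le
    _ = 4 ^ d * d ! * (δ * Λ ^ (d - 1)) := by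
      rw [show (4 : ℝ) ^ d = 2 ^ d * 2 ^ d by rw [← mul_pow]; norm_num]; ring

end Bounds

theorem det_first_order_expansion {r : ℕ} {A B E : Matrix (Fin d) (Fin d) ℝ} {h Λ : ℝ}
    (hA : A.rank ≤ r) (hr : r ≤ d) (h0 : 0 ≤ h) (h1 : h ≤ 1) (hΛ : 0 ≤ Λ)
    (hAΛ : ∀ i j, |A i j| ≤ Λ) (hBΛ : ∀ i j, |B i j| ≤ Λ) (hEΛ : ∀ i j, |E i j| ≤ Λ) :
    ∃ Q, (A + h • (B + h • E)).det = h ^ (d - r) * Q ∧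
      |Q - gammaR r A B - h * (gammaPred r A B + gamma' r A B E)|
        ≤ h ^ 2 * (4 ^ d * d ! * Λ ^ d) := by
  refine ⟨_, det_add_smul_add_smul_eq_pow_mul_sum hA hr B E h, ?_⟩
  have htrunc := abs_sum_pow_mul_sub_le {p : Finset (Fin d) × Finset (Fin d) | #p.1 ≤ r}
    (fun p => r - #p.1 + #p.2) (fun p => (colMix₃ A B E p.1 p.2).det) h0 h1
  rw [sum_det_colMix₃_lowest_order, sum_det_colMix₃_first_order] at htrunc
  refine htrunc.trans (mul_le_mul_of_nonneg_left ?_ (sq_nonneg h))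
  have hterm : ∀ p : Finset (Fin d) × Finset (Fin d), |(colMix₃ A B E p.1 p.2).det| ≤ d ! * Λ ^ d :=
    fun p => by
      simpa [← pow_add, card_add_card_compl] using abs_det_colMix₃_le hΛ hAΛ hBΛ hEΛ p.1 p.2
  calc ∑ p ∈ {p : Finset (Fin d) × Finset (Fin d) | #p.1 ≤ r}, |(colMix₃ A B E p.1 p.2).det|
      ≤ ∑ _p ∈ {p : Finset (Fin d) × Finset (Fin d) | #p.1 ≤ r}, d ! * Λ ^ d :=
        sum_le_sum fun p _ => hterm p
    _ ≤ ∑ _p : Finset (Fin d) × Finset (Fin d), d ! * Λ ^ d :=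
        sum_le_sum_of_subset_of_nonneg (subset_univ _) fun _ _ _ => by positivity
    _ = 4 ^ d * d ! * Λ ^ d := by
      rw [sum_const, card_univ, Fintype.card_prod, Fintype.card_finset, Fintype.card_fin,
        nsmul_eq_mul]
      push_cast
      rw [← mul_pow]; norm_num; ring

theorem abs_sq_sub_sq_sub_le {Q g u v h P p : ℝ} (h0 : 0 ≤ h) (h1 : h ≤ 1) (hg : |g| ≤ P)
    (hu : |u| ≤ 2 * P) (hv : |v| ≤ p) (hpP : p ≤ P) (hQ : |Q - g - h * (u + v)| ≤ h ^ 2 * P) :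
    |Q ^ 2 - g ^ 2 - 2 * h * g * u| ≤ 18 * h * P * (h * P + p) := by
  set ε := Q - g - h * (u + v)
  set x := h * (u + v) + ε
  have hP : 0 ≤ P := (abs_nonneg g).trans hg
  have hp : 0 ≤ p := (abs_nonneg v).trans hv
  have hx : |x| ≤ 4 * h * P := by
    calc |x| ≤ h * |u + v| + |ε| := by rw [← abs_of_nonneg h0, ← abs_mul]; exact abs_add_le _ _
      _ ≤ h * (|u| + |v|) + h ^ 2 * P := by gcongr; exact abs_add_le _ _
      _ ≤ h * (2 * P + P) + h * P := by
          gcongr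
          · linarith
          · nlinarith
      _ = 4 * h * P := by ring
  have hexp : Q ^ 2 - g ^ 2 - 2 * h * g * u = 2 * h * (g * v) + 2 * (g * ε) + x ^ 2 := by
    simp only [x, ε]; ring
  rw [hexp]
  calc |2 * h * (g * v) + 2 * (g * ε) + x ^ 2|
      ≤ 2 * h * (|g| * |v|) + 2 * (|g| * |ε|) + |x| ^ 2 := by
        refine (abs_add_le _ _).trans (add_le_add ((abs_add_le _ _).trans (le_of_eq ?_)) ?_)
        · simp only [abs_mul, abs_of_nonneg h0, abs_two]
        · rw [abs_pow]
    _ ≤ 2 * h * (P * p) + 2 * (P * (h ^ 2 * P)) + (4 * h * P) ^ 2 := by gcongr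
    _ ≤ 18 * h * P * (h * P + p) := by nlinarith [mul_nonneg (mul_nonneg h0 hP) hp]

theorem gamma'_add (r : ℕ) (A B C D : Matrix (Fin d) (Fin d) ℝ) :
    gamma' r A B (C + D) = gamma' r A B C + gamma' r A B D := by
  simp only [gamma', ← sum_add_distrib]
  refine sum_congr rfl fun I _ => sum_congr rfl fun k hk => ?_
  have hcol : ∀ X : Matrix (Fin d) (Fin d) ℝ,
      (of fun i j => if j ∈ I then A i j else if j = k then X i j else B i j)
        = updateCol (colMix A B I) k fun i => X i k := fun X => by
    ext i j
    by_cases hjk : j = k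
    · subst hjk; simp [(mem_compl.1 hk)]
    · simp [colMix, hjk]
  rw [hcol, hcol, hcol, ← det_updateCol_add]
  rfl

theorem abs_det_sq_div_sub_le {r : ℕ} {A B C D : Matrix (Fin d) (Fin d) ℝ} {h a b c δ : ℝ}
    (hd : d ≠ 0) (hA : A.rank ≤ r) (hr : r ≤ d) (h0 : 0 < h) (h1 : h ≤ 1)
    (ha : ∀ i j, |A i j| ≤ a) (hb : ∀ i j, |B i j| ≤ b) (hc : ∀ i j, |C i j| ≤ c)
    (hδ : ∀ i j, |D i j| ≤ δ) :
    |(A + h • B + h ^ 2 • C + h ^ 2 • D).det ^ 2 / h ^ (2 * d - 2 * r) - gammaR r A B ^ 2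
        - 2 * h * gammaR r A B * (gammaPred r A B + gamma' r A B C)|
      ≤ 18 * (4 ^ d * d !) ^ 2 * h * (a + b + c + δ) ^ (2 * d - 1)
          * (h * (a + b + c + δ) + δ) := by
  have hnonneg : ∀ {X : Matrix (Fin d) (Fin d) ℝ} {x : ℝ}, (∀ i j, |X i j| ≤ x) → 0 ≤ x :=
    fun hX => (abs_nonneg _).trans (hX ⟨0, by omega⟩ ⟨0, by omega⟩)
  set Λ := a + b + c + δ
  have hΛ : 0 ≤ Λ := by linarith [hnonneg ha, hnonneg hb, hnonneg hc, hnonneg hδ]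
  have hδΛ : δ ≤ Λ := by linarith [hnonneg ha, hnonneg hb, hnonneg hc]
  have hAΛ : ∀ i j, |A i j| ≤ Λ := fun i j => by
    linarith [ha i j, hnonneg hb, hnonneg hc, hnonneg hδ]
  have hBΛ : ∀ i j, |B i j| ≤ Λ := fun i j => by
    linarith [hb i j, hnonneg ha, hnonneg hc, hnonneg hδ]
  have hCΛ : ∀ i j, |C i j| ≤ Λ := fun i j => by
    linarith [hc i j, hnonneg ha, hnonneg hb, hnonneg hδ]
  have hEΛ : ∀ i j, |(C + D) i j| ≤ Λ := fun i j => by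
    rw [Matrix.add_apply]
    linarith [abs_add_le (C i j) (D i j), hc i j, hδ i j, hnonneg ha, hnonneg hb]
  have hΛd : Λ * Λ ^ (d - 1) = Λ ^ d := mul_pow_sub_one hd Λ
  obtain ⟨Q, hdet, hQ⟩ := det_first_order_expansion hA hr h0.le h1 hΛ hAΛ hBΛ hEΛ
  rw [gamma'_add, ← add_assoc] at hQ
  have hsq : (A + h • B + h ^ 2 • C + h ^ 2 • D).det ^ 2 / h ^ (2 * d - 2 * r) = Q ^ 2 := by
    rw [show A + h • B + h ^ 2 • C + h ^ 2 • D = A + h • (B + h • (C + D)) by module, hdet,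
      mul_pow, ← pow_mul, show (d - r) * 2 = 2 * d - 2 * r by omega,
      mul_div_cancel_left₀ _ (by positivity)]
  have hu : |gammaPred r A B + gamma' r A B C| ≤ 2 * (4 ^ d * d ! * Λ ^ d) := by
    have hC' := abs_gamma'_le hΛ hΛ hAΛ hBΛ hCΛ r
    rw [hΛd] at hC'
    linarith [abs_add_le (gammaPred r A B) (gamma' r A B C), abs_gammaPred_le hΛ hAΛ hBΛ r]
  have hpP : 4 ^ d * d ! * (δ * Λ ^ (d - 1)) ≤ 4 ^ d * d ! * Λ ^ d := by
    rw [← hΛd]; gcongr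
  rw [hsq]
  refine (abs_sq_sub_sq_sub_le h0.le h1 (abs_gammaR_le hΛ hAΛ hBΛ r) hu
    (abs_gamma'_le hΛ (hnonneg hδ) hAΛ hBΛ hδ r) hpP hQ).trans (le_of_eq ?_)
  obtain ⟨m, rfl⟩ := Nat.exists_eq_add_of_lt (Nat.pos_of_ne_zero hd)
  rw [show 0 + m + 1 - 1 = m by omega, show 2 * (0 + m + 1) - 1 = 2 * m + 1 by omega]
  ring

end ColumnExpansion

theorem det_sq_second_order_expansion (d : ℕ) :
    ∃ K > (0:ℝ), ∀ r ≤ d, ∀ h ∈ Set.Ioc (0:ℝ) 1,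
      ∀ A B C D : Matrix (Fin d) (Fin d) ℝ, A.rank ≤ r →
        |(A + h • B + (h ^ 2) • C + (h ^ 2) • D).det ^ 2 / h ^ (2 * d - 2 * r)
            - gammaR r A B ^ 2
            - 2 * h * gammaR r A B * (gammaPred r A B + gamma' r A B C)|
          ≤ K * h * (frob A + frob B + frob C + frob D) ^ (2 * d - 1)
              * (h * (frob A + frob B + frob C + frob D) + frob D) := by
  obtain rfl | hd := Nat.eq_zero_or_pos d
  · refine ⟨1, one_pos, fun r hr h _ A B C D _ => ?_⟩
    obtain rfl := Nat.le_zero.1 hr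
    simp [gammaR, gammaPred, gamma', frob]
  exact ⟨18 * (4 ^ d * d !) ^ 2, by positivity, fun r hr h ⟨h0, h1⟩ A B C D hA =>
    abs_det_sq_div_sub_le hd.ne' hA hr h0 h1 (abs_entry_le_frob A) (abs_entry_le_frob B)
      (abs_entry_le_frob C) (abs_entry_le_frob D)⟩
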